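/- Fix an integer n ≥ 1. Define additionally, for smooth functions u, h on an open subset of ℝ × ℝ^{n+1}: |∇̃u|² := −(∂_t u)² + Σ_{i=0}^n (∂_{x^i} u)² (the squared ambient gradient with respect to g̃ = −dt² + Σ(dx^i)²) and δ̃(h du) := ∂_t(h·∂_t u) − Σ_{i=0}^n ∂_{x^i}(h·∂_{x^i} u) (the divergence-type operator with the convention δ(du) = Δ̃u). Then for every smooth function u on an open subset of ℝ × ℝ^{n+1} one has, identically: −((n−2)/16)·u·Δ̃²(u²) + (n/96)·( Δ̃²(u³) + 3u²·Δ̃²u ) + ((n−4)/16)·( u·(Δ̃u)² + Δ̃(u²·Δ̃u) ) = −(1/2)·δ̃( |∇̃u|²·du ) + ((n−4)/16)·( u·Δ̃(|∇̃u|²) + δ̃( (Δ̃(u²))·du ) ). -/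

import Mathlib

/-- The flat Fefferman–Graham ambient space `ℝ × ℝ^{n+1}` of the standard conformal
`n`-sphere, with coordinates `(t, x⁰, …, xⁿ)`. -/
abbrev Amb (n : ℕ) : Type := ℝ × (Fin (n+1) → ℝ)

/-- The partial derivative `∂_t`. -/
noncomputable def ptD {n : ℕ} (f : Amb n → ℝ) (p : Amb n) : ℝ :=
  fderiv ℝ f p (1, 0)

/-- The partial derivative `∂_{xⁱ}`. -/
noncomputable def pxD {n : ℕ} (i : Fin (n+1)) (f : Amb n → ℝ) (p : Amb n) : ℝ :=
  fderiv ℝ f p (0, Pi.single i 1)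

/-- The flat ambient Laplacian `Δ̃f = ∂_t²f − Σᵢ ∂_{xⁱ}²f` (convention `Δ ≥ 0` for the
metric `g̃ = −dt² + Σᵢ (dxⁱ)²`). -/
noncomputable def LapA {n : ℕ} (f : Amb n → ℝ) : Amb n → ℝ :=
  fun p => ptD (fun q => ptD f q) p - ∑ i, pxD i (fun q => pxD i f q) p

/-- The Euler (dilation) operator `Xf = t∂_t f + Σᵢ xⁱ∂_{xⁱ} f`. -/
noncomputable def EulerA {n : ℕ} (f : Amb n → ℝ) (p : Amb n) : ℝ :=
  p.1 * ptD f p + ∑ i, p.2 i * pxD i f p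

/-- The function `Q(t,x) = |x|² − t²`. -/
def QA {n : ℕ} (p : Amb n) : ℝ := (∑ i, (p.2 i)^2) - p.1^2

/-- The half-space `{(t,x) : t > 0}`. -/
def HS (n : ℕ) : Set (Amb n) := {p | 0 < p.1}

/-- The squared ambient gradient `|∇̃u|² = −(∂_t u)² + Σᵢ (∂_{xⁱ}u)²` with respect to
`g̃ = −dt² + Σᵢ (dxⁱ)²`. -/
noncomputable def gradSq {n : ℕ} (u : Amb n → ℝ) (p : Amb n) : ℝ :=
  -(ptD u p)^2 + ∑ i, (pxD i u p)^2

/-- The divergence-type operator `δ̃(h du) = ∂_t(h·∂_t u) − Σᵢ ∂_{xⁱ}(h·∂_{xⁱ}u)`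
(convention `δ̃(du) = Δ̃u`). -/
noncomputable def divA {n : ℕ} (h u : Amb n → ℝ) (p : Amb n) : ℝ :=
  ptD (fun q => h q * ptD u q) p - ∑ i, pxD i (fun q => h q * pxD i u q) p

/-! Both sides are expanded with the Leibniz rule `Δ̃(fg) = fΔ̃g + gΔ̃f − 2⟨∇̃f, ∇̃g⟩` for the flat
Laplacian and with `δ̃(h du) = hΔ̃u − ⟨∇̃h, ∇̃u⟩`.  Each side becomes the same polynomial in
`u, Δ̃u, Δ̃²u, |∇̃u|², Δ̃|∇̃u|², ⟨∇̃u, ∇̃Δ̃u⟩, ⟨∇̃u, ∇̃|∇̃u|²⟩`. -/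

open scoped ContDiff

section DirDeriv

variable {E : Type*} [NormedAddCommGroup E] [NormedSpace ℝ E] {U : Set E} {f g : E → ℝ}
  {x : E}

noncomputable def dirDeriv (v : E) (f : E → ℝ) (x : E) : ℝ := fderiv ℝ f x v

theorem ContDiffOn.differentiableAt_of_isOpen (hU : IsOpen U) (hf : ContDiffOn ℝ ∞ f U)
    (hx : x ∈ U) : DifferentiableAt ℝ f x :=
  (hf.differentiableOn (by simp)).differentiableAt (hU.mem_nhds hx)

theorem ContDiffOn.dirDeriv (hU : IsOpen U) (hf : ContDiffOn ℝ ∞ f U) (v : E) :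
    ContDiffOn ℝ ∞ (dirDeriv v f) U :=
  (hf.fderiv_of_isOpen hU (by exact_mod_cast le_top)).clm_apply contDiffOn_const

theorem dirDeriv_congr (hU : IsOpen U) (hfg : Set.EqOn f g U) (hx : x ∈ U) (v : E) :
    dirDeriv v f x = dirDeriv v g x := by
  rw [dirDeriv, dirDeriv, (Filter.eventuallyEq_of_mem (hU.mem_nhds hx) hfg).fderiv_eq]

theorem dirDeriv_mul (hf : DifferentiableAt ℝ f x) (hg : DifferentiableAt ℝ g x) (v : E) :
    dirDeriv v (fun y => f y * g y) x = f x * dirDeriv v g x + g x * dirDeriv v f x := by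
  simp [dirDeriv, fderiv_fun_mul hf hg]

theorem dirDeriv_add (hf : DifferentiableAt ℝ f x) (hg : DifferentiableAt ℝ g x) (v : E) :
    dirDeriv v (fun y => f y + g y) x = dirDeriv v f x + dirDeriv v g x := by
  simp [dirDeriv, fderiv_fun_add hf hg]

theorem dirDeriv_const_mul_sub_const_mul (hf : DifferentiableAt ℝ f x)
    (hg : DifferentiableAt ℝ g x) (a b : ℝ) (v : E) :
    dirDeriv v (fun y => a * f y - b * g y) x = a * dirDeriv v f x - b * dirDeriv v g x := by
  simp [dirDeriv, fderiv_fun_sub (hf.const_mul a) (hg.const_mul b), fderiv_const_mul hf,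
    fderiv_const_mul hg]

theorem dirDeriv_dirDeriv_mul (hU : IsOpen U) (hf : ContDiffOn ℝ ∞ f U)
    (hg : ContDiffOn ℝ ∞ g U) (hx : x ∈ U) (v : E) :
    dirDeriv v (dirDeriv v fun y => f y * g y) x =
      f x * dirDeriv v (dirDeriv v g) x + g x * dirDeriv v (dirDeriv v f) x
        + 2 * (dirDeriv v f x * dirDeriv v g x) := by
  have hf' := hf.differentiableAt_of_isOpen hU hx
  have hg' := hg.differentiableAt_of_isOpen hU hx
  have hDf := (hf.dirDeriv hU v).differentiableAt_of_isOpen hU hx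
  have hDg := (hg.dirDeriv hU v).differentiableAt_of_isOpen hU hx
  rw [dirDeriv_congr hU (fun y hy => dirDeriv_mul (hf.differentiableAt_of_isOpen hU hy)
    (hg.differentiableAt_of_isOpen hU hy) v) hx,
    dirDeriv_add (f := fun y => f y * dirDeriv v g y) (g := fun y => g y * dirDeriv v f y)
      (hf'.mul hDg) (hg'.mul hDf), dirDeriv_mul hf' hDg, dirDeriv_mul hg' hDf]
  ring

theorem dirDeriv_dirDeriv_const_mul_sub_const_mul (hU : IsOpen U) (hf : ContDiffOn ℝ ∞ f U)
    (hg : ContDiffOn ℝ ∞ g U) (hx : x ∈ U) (a b : ℝ) (v : E) :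
    dirDeriv v (dirDeriv v fun y => a * f y - b * g y) x =
      a * dirDeriv v (dirDeriv v f) x - b * dirDeriv v (dirDeriv v g) x := by
  rw [dirDeriv_congr hU (fun y hy => dirDeriv_const_mul_sub_const_mul
      (hf.differentiableAt_of_isOpen hU hy) (hg.differentiableAt_of_isOpen hU hy) a b v) hx,
    dirDeriv_const_mul_sub_const_mul ((hf.dirDeriv hU v).differentiableAt_of_isOpen hU hx)
      ((hg.dirDeriv hU v).differentiableAt_of_isOpen hU hx)]

end DirDeriv

section Ambient

variable {n : ℕ} {U : Set (Amb n)} {f g h u : Amb n → ℝ} {p : Amb n}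

noncomputable def gradInner (f g : Amb n → ℝ) (p : Amb n) : ℝ :=
  -(ptD f p * ptD g p) + ∑ i, pxD i f p * pxD i g p

theorem ptD_eq_dirDeriv (f : Amb n → ℝ) (p : Amb n) : ptD f p = dirDeriv (1, 0) f p := rfl

theorem pxD_eq_dirDeriv (i : Fin (n + 1)) (f : Amb n → ℝ) (p : Amb n) :
    pxD i f p = dirDeriv (0, Pi.single i 1) f p := rfl

theorem gradSq_eq_gradInner (u : Amb n → ℝ) : gradSq u = gradInner u u := by
  ext p
  simp only [gradSq, gradInner, pow_two]

theorem gradInner_comm (f g : Amb n → ℝ) (p : Amb n) : gradInner f g p = gradInner g f p := by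
  simp only [gradInner, mul_comm]

theorem gradInner_mul (hf : DifferentiableAt ℝ f p) (hg : DifferentiableAt ℝ g p) :
    gradInner (fun q => f q * g q) h p = f p * gradInner g h p + g p * gradInner f h p := by
  simp only [gradInner, ptD_eq_dirDeriv, pxD_eq_dirDeriv, dirDeriv_mul hf hg, add_mul,
    Finset.sum_add_distrib, mul_assoc, ← Finset.mul_sum]
  ring

theorem gradInner_const_mul_sub_const_mul (hf : DifferentiableAt ℝ f p)
    (hg : DifferentiableAt ℝ g p) (a b : ℝ) :
    gradInner (fun q => a * f q - b * g q) h p = a * gradInner f h p - b * gradInner g h p := by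
  simp only [gradInner, ptD_eq_dirDeriv, pxD_eq_dirDeriv, dirDeriv_const_mul_sub_const_mul hf hg,
    sub_mul, Finset.sum_sub_distrib, mul_assoc, ← Finset.mul_sum]
  ring

theorem gradInner_sq (hu : DifferentiableAt ℝ u p) :
    gradInner (fun q => u q ^ 2) h p = 2 * u p * gradInner u h p := by
  simp only [pow_two, gradInner_mul hu hu]
  ring

theorem ContDiffOn.lapA (hU : IsOpen U) (hf : ContDiffOn ℝ ∞ f U) : ContDiffOn ℝ ∞ (LapA f) U :=
  ((hf.dirDeriv hU _).dirDeriv hU _).sub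
    (ContDiffOn.sum fun _ _ => (hf.dirDeriv hU _).dirDeriv hU _)

theorem ContDiffOn.gradSq (hU : IsOpen U) (hu : ContDiffOn ℝ ∞ u U) :
    ContDiffOn ℝ ∞ (gradSq u) U :=
  ((hu.dirDeriv hU _).pow 2).neg.add (ContDiffOn.sum fun _ _ => (hu.dirDeriv hU _).pow 2)

theorem lapA_congr (hU : IsOpen U) (hfg : Set.EqOn f g U) (hp : p ∈ U) :
    LapA f p = LapA g p := by
  have hD : ∀ v, Set.EqOn (dirDeriv v f) (dirDeriv v g) U :=
    fun v q hq => dirDeriv_congr hU hfg hq v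
  simp only [LapA, ptD_eq_dirDeriv, pxD_eq_dirDeriv, dirDeriv_congr hU (hD _) hp]

theorem lapA_mul (hU : IsOpen U) (hf : ContDiffOn ℝ ∞ f U) (hg : ContDiffOn ℝ ∞ g U)
    (hp : p ∈ U) :
    LapA (fun q => f q * g q) p = f p * LapA g p + g p * LapA f p - 2 * gradInner f g p := by
  simp only [LapA, gradInner, ptD_eq_dirDeriv, pxD_eq_dirDeriv,
    dirDeriv_dirDeriv_mul hU hf hg hp, Finset.sum_add_distrib, ← Finset.mul_sum]
  ring

theorem lapA_const_mul_sub_const_mul (hU : IsOpen U) (hf : ContDiffOn ℝ ∞ f U)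
    (hg : ContDiffOn ℝ ∞ g U) (hp : p ∈ U) (a b : ℝ) :
    LapA (fun q => a * f q - b * g q) p = a * LapA f p - b * LapA g p := by
  simp only [LapA, ptD_eq_dirDeriv, pxD_eq_dirDeriv,
    dirDeriv_dirDeriv_const_mul_sub_const_mul hU hf hg hp, Finset.sum_sub_distrib,
    ← Finset.mul_sum]
  ring

theorem divA_eq (hU : IsOpen U) (hh : ContDiffOn ℝ ∞ h U) (hu : ContDiffOn ℝ ∞ u U)
    (hp : p ∈ U) :
    divA h u p = h p * LapA u p - gradInner h u p := by
  simp only [divA, LapA, gradInner, ptD_eq_dirDeriv, pxD_eq_dirDeriv,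
    dirDeriv_mul (hh.differentiableAt_of_isOpen hU hp)
      ((hu.dirDeriv hU _).differentiableAt_of_isOpen hU hp),
    Finset.sum_add_distrib, ← Finset.mul_sum, mul_comm (dirDeriv _ u p)]
  ring

theorem divA_congr (hU : IsOpen U) (hfg : Set.EqOn f g U) (hp : p ∈ U) :
    divA f u p = divA g u p := by
  have hD : ∀ v, Set.EqOn (fun q => f q * dirDeriv v u q) (fun q => g q * dirDeriv v u q) U :=
    fun v q hq => congrArg (· * dirDeriv v u q) (hfg hq)
  simp only [divA, ptD_eq_dirDeriv, pxD_eq_dirDeriv, dirDeriv_congr hU (hD _) hp]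

end Ambient

section Expansion

variable {n : ℕ} {U : Set (Amb n)} {u : Amb n → ℝ} {p : Amb n}

theorem lapA_sq (hU : IsOpen U) (hu : ContDiffOn ℝ ∞ u U) :
    Set.EqOn (LapA fun q => u q ^ 2) (fun q => 2 * (u q * LapA u q) - 2 * gradSq u q) U :=
    fun q hq => by
  simp only [pow_two, lapA_mul hU hu hu hq, gradSq_eq_gradInner]
  ring

theorem lapA_cube (hU : IsOpen U) (hu : ContDiffOn ℝ ∞ u U) :
    Set.EqOn (LapA fun q => u q ^ 3)
      (fun q => 3 * (u q ^ 2 * LapA u q) - 6 * (u q * gradSq u q)) U := fun q hq => by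
  have hcube : (fun q => u q ^ 3) = fun q => u q * u q ^ 2 := by ext q; ring
  rw [hcube, lapA_mul hU hu (hu.pow 2) hq, lapA_sq hU hu hq, gradInner_comm,
    gradInner_sq (hu.differentiableAt_of_isOpen hU hq), gradSq_eq_gradInner]
  ring

theorem lapA_sq_mul_lapA (hU : IsOpen U) (hu : ContDiffOn ℝ ∞ u U) (hp : p ∈ U) :
    LapA (fun q => u q ^ 2 * LapA u q) p =
      u p ^ 2 * LapA (LapA u) p + 2 * u p * LapA u p ^ 2 - 2 * gradSq u p * LapA u p
        - 4 * u p * gradInner u (LapA u) p := by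
  rw [lapA_mul hU (hu.pow 2) (hu.lapA hU) hp, lapA_sq hU hu hp,
    gradInner_sq (hu.differentiableAt_of_isOpen hU hp)]
  ring

theorem lapA_lapA_sq (hU : IsOpen U) (hu : ContDiffOn ℝ ∞ u U) (hp : p ∈ U) :
    LapA (LapA fun q => u q ^ 2) p =
      2 * u p * LapA (LapA u) p + 2 * LapA u p ^ 2 - 4 * gradInner u (LapA u) p
        - 2 * LapA (gradSq u) p := by
  rw [lapA_congr hU (lapA_sq hU hu) hp,
    lapA_const_mul_sub_const_mul hU (hu.mul (hu.lapA hU)) (hu.gradSq hU) hp,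
    lapA_mul hU hu (hu.lapA hU) hp]
  ring

theorem lapA_lapA_cube (hU : IsOpen U) (hu : ContDiffOn ℝ ∞ u U) (hp : p ∈ U) :
    LapA (LapA fun q => u q ^ 3) p =
      3 * u p ^ 2 * LapA (LapA u) p + 6 * u p * LapA u p ^ 2 - 12 * gradSq u p * LapA u p
        - 12 * u p * gradInner u (LapA u) p - 6 * u p * LapA (gradSq u) p
        + 12 * gradInner u (gradSq u) p := by
  rw [lapA_congr hU (lapA_cube hU hu) hp,
    lapA_const_mul_sub_const_mul hU ((hu.pow 2).mul (hu.lapA hU)) (hu.mul (hu.gradSq hU)) hp,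
    lapA_sq_mul_lapA hU hu hp, lapA_mul hU hu (hu.gradSq hU) hp]
  ring

theorem divA_gradSq (hU : IsOpen U) (hu : ContDiffOn ℝ ∞ u U) (hp : p ∈ U) :
    divA (gradSq u) u p = gradSq u p * LapA u p - gradInner u (gradSq u) p := by
  rw [divA_eq hU (hu.gradSq hU) hu hp, gradInner_comm]

theorem divA_lapA_sq (hU : IsOpen U) (hu : ContDiffOn ℝ ∞ u U) (hp : p ∈ U) :
    divA (LapA fun q => u q ^ 2) u p =
      2 * u p * LapA u p ^ 2 - 4 * gradSq u p * LapA u p - 2 * u p * gradInner u (LapA u) p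
        + 2 * gradInner u (gradSq u) p := by
  have huL := hu.mul (hu.lapA hU)
  rw [divA_congr hU (lapA_sq hU hu) hp,
    divA_eq hU ((contDiffOn_const.mul huL).sub (contDiffOn_const.mul (hu.gradSq hU))) hu hp,
    gradInner_const_mul_sub_const_mul (huL.differentiableAt_of_isOpen hU hp)
      ((hu.gradSq hU).differentiableAt_of_isOpen hU hp),
    gradInner_mul (hu.differentiableAt_of_isOpen hU hp)
      ((hu.lapA hU).differentiableAt_of_isOpen hU hp),
    gradInner_comm (LapA u), gradInner_comm (gradSq u), ← gradSq_eq_gradInner]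
  ring

end Expansion

theorem stmt_14_general (n : ℕ)
    (U : Set (Amb n)) (hU : IsOpen U) (u : Amb n → ℝ)
    (hu : ContDiffOn ℝ (⊤ : ℕ∞) u U) (p : Amb n) (hp : p ∈ U) :
    -(((n:ℝ) - 2)/16) * u p * LapA^[2] (fun q => (u q)^2) p
      + ((n:ℝ)/96) * (LapA^[2] (fun q => (u q)^3) p + 3 * (u p)^2 * LapA^[2] u p)
      + (((n:ℝ) - 4)/16) * (u p * (LapA u p)^2 + LapA (fun q => (u q)^2 * LapA u q) p)
    = -(1/2) * divA (gradSq u) u p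
      + (((n:ℝ) - 4)/16) * (u p * LapA (gradSq u) p
          + divA (fun q => LapA (fun s => (u s)^2) q) u p) := by
  simp only [Function.iterate_succ_apply', Function.iterate_zero_apply]
  rw [lapA_lapA_sq hU hu hp, lapA_lapA_cube hU hu hp, lapA_sq_mul_lapA hU hu hp,
    divA_gradSq hU hu hp, divA_lapA_sq hU hu hp]
  ring

/-- the identity of Example 3.5, realizing the σ₂-operator ambiently:
for every smooth `u` on an open subset of `ℝ × ℝ^{n+1}`,
`−((n−2)/16)·u·Δ̃²(u²) + (n/96)·(Δ̃²(u³) + 3u²·Δ̃²u) + ((n−4)/16)·(u·(Δ̃u)² + Δ̃(u²·Δ̃u))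
  = −(1/2)·δ̃(|∇̃u|²·du) + ((n−4)/16)·(u·Δ̃(|∇̃u|²) + δ̃((Δ̃(u²))·du))`. -/
theorem stmt_14 (n : ℕ) (hn : 1 ≤ n)
    (U : Set (Amb n)) (hU : IsOpen U) (u : Amb n → ℝ)
    (hu : ContDiffOn ℝ (⊤ : ℕ∞) u U) (p : Amb n) (hp : p ∈ U) :
    -(((n:ℝ) - 2)/16) * u p * LapA^[2] (fun q => (u q)^2) p
      + ((n:ℝ)/96) * (LapA^[2] (fun q => (u q)^3) p + 3 * (u p)^2 * LapA^[2] u p)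
      + (((n:ℝ) - 4)/16) * (u p * (LapA u p)^2 + LapA (fun q => (u q)^2 * LapA u q) p)
    = -(1/2) * divA (gradSq u) u p
      + (((n:ℝ) - 4)/16) * (u p * LapA (gradSq u) p
          + divA (fun q => LapA (fun s => (u s)^2) q) u p) :=
  stmt_14_general n U hU u hu p hp
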